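/- Let n ≥ 1 and let F be an upset of a De Morgan lattice L. Then F is a complete prime n-filter on L if and only if there exist k with 1 ≤ k ≤ n and a family G : Fin k → Set L such that each G i is a complete prime filter on L and F = ⋃ i, G i. -/

import Mathlib

/-- A De Morgan lattice: a distributive lattice with an antitone involution. -/
class DeMorgan (L : Type*) extends DistribLattice L where
  dneg : L → L
  dneg_dneg : ∀ x : L, dneg (dneg x) = x
  dneg_sup : ∀ x y : L, dneg (x ⊔ y) = dneg x ⊓ dneg y

prefix:max "∼" => DeMorgan.dneg

section Defs

variable {α : Type*}

/-- An upward closed subset of a lattice. -/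
def IsUpset [Lattice α] (F : Set α) : Prop :=
  ∀ ⦃x y : α⦄, x ∈ F → x ≤ y → y ∈ F

/-- A lattice filter: an upset closed under binary meets. -/
def IsLatFilter [Lattice α] (F : Set α) : Prop :=
  IsUpset F ∧ ∀ x y : α, x ∈ F → y ∈ F → x ⊓ y ∈ F

/-- An `n`-filter: an upset such that for every nonempty finite `Y`, if the meet of
every nonempty subset of `Y` of size at most `n` lies in `F`, then so does the meet of `Y`. -/
def IsNFilter [Lattice α] (n : ℕ) (F : Set α) : Prop :=
  IsUpset F ∧ ∀ (Y : Finset α) (hY : Y.Nonempty),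
    (∀ (X : Finset α) (hX : X.Nonempty), X ⊆ Y → X.card ≤ n → X.inf' hX id ∈ F) →
    Y.inf' hY id ∈ F

/-- A prime upset: `x ⊔ y ∈ F` implies `x ∈ F` or `y ∈ F`. -/
def IsPrimeUpset [Lattice α] (F : Set α) : Prop :=
  ∀ x y : α, x ⊔ y ∈ F → x ∈ F ∨ y ∈ F

/-- A downward closed subset of a lattice. -/
def IsDownset [Lattice α] (I : Set α) : Prop :=
  ∀ ⦃x y : α⦄, x ∈ I → y ≤ x → y ∈ I

/-- A lattice ideal: a downset closed under binary joins. -/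
def IsIdeal [Lattice α] (I : Set α) : Prop :=
  IsDownset I ∧ ∀ x y : α, x ∈ I → y ∈ I → x ⊔ y ∈ I

/-- An `n`-ideal: the order dual notion of an `n`-filter. -/
def IsNIdeal [Lattice α] (n : ℕ) (I : Set α) : Prop :=
  IsDownset I ∧ ∀ (Y : Finset α) (hY : Y.Nonempty),
    (∀ (X : Finset α) (hX : X.Nonempty), X ⊆ Y → X.card ≤ n → X.sup' hX id ∈ I) →
    Y.sup' hY id ∈ I

variable {L : Type*} [DeMorgan L]

/-- Almost complete upset: `x ∈ F` implies `x ⊓ (y ⊔ ∼y) ∈ F`. -/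
def AlmostComplete (F : Set L) : Prop := ∀ x ∈ F, ∀ y : L, x ⊓ (y ⊔ ∼y) ∈ F

/-- Complete upset: almost complete and nonempty. -/
def IsCompleteUpset (F : Set L) : Prop := AlmostComplete F ∧ F.Nonempty

/-- Almost consistent upset: `(x ⊓ ∼x) ⊔ y ∈ F` implies `y ∈ F`. -/
def AlmostConsistent (F : Set L) : Prop := ∀ x y : L, (x ⊓ ∼x) ⊔ y ∈ F → y ∈ F

/-- Consistent upset: almost consistent and not total. -/
def IsConsistentUpset (F : Set L) : Prop := AlmostConsistent F ∧ F ≠ Set.univ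

/-- Classical upset: complete and consistent. -/
def IsClassicalUpset (F : Set L) : Prop := IsCompleteUpset F ∧ IsConsistentUpset F

/-- Kalman upset. -/
def IsKalmanUpset (F : Set L) : Prop :=
  ∀ x y z u : L, ((x ⊓ ∼x) ⊓ z) ⊔ u ∈ F → ((y ⊔ ∼y) ⊓ z) ⊔ u ∈ F

/-- A homomorphism of De Morgan lattices. -/
def IsDMHom {L M : Type*} [DeMorgan L] [DeMorgan M] (h : L → M) : Prop :=
  (∀ x y : L, h (x ⊓ y) = h x ⊓ h y) ∧ (∀ x y : L, h (x ⊔ y) = h x ⊔ h y) ∧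
    ∀ x : L, h (∼x) = ∼(h x)

/-- The filter generated by all elements of the form `x ⊔ ∼x`. -/
def Fcomp (L : Type*) [DeMorgan L] : Set L :=
  {a | ∃ (s : Finset L) (hs : s.Nonempty), s.inf' hs (fun x => x ⊔ ∼x) ≤ a}

/-- The `n`-filter generated by a set. -/
def nFilterGen (n : ℕ) (U : Set L) : Set L :=
  ⋂₀ {F : Set L | IsNFilter n F ∧ U ⊆ F}

/-- `Comp U`. -/
def CompCl (U : Set L) : Set L := {x | ∃ a ∈ U, ∃ f ∈ Fcomp L, a ⊓ f ≤ x}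

/-- `Cons U`. -/
def ConsCl (U : Set L) : Set L := {x | ∃ f ∈ Fcomp L, ∼f ⊔ x ∈ U}

/-- A congruence of De Morgan lattices, as a binary relation. -/
def IsCongruence (θ : L → L → Prop) : Prop :=
  Equivalence θ ∧
  (∀ a b c d : L, θ a b → θ c d → θ (a ⊓ c) (b ⊓ d)) ∧
  (∀ a b c d : L, θ a b → θ c d → θ (a ⊔ c) (b ⊔ d)) ∧
  ∀ a b : L, θ a b → θ (∼a) (∼b)

end Defs

/-- The four-element De Morgan lattice `DM₁` on `Bool × Bool`. -/
instance : DeMorgan (Bool × Bool) :=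
  { (inferInstance : DistribLattice (Bool × Bool)) with
    dneg := fun p => (!p.2, !p.1)
    dneg_dneg := by decide
    dneg_sup := by decide }

/-- Powers of `DM₁`, with componentwise operations. -/
instance {ι : Type*} : DeMorgan (ι → Bool × Bool) :=
  { (inferInstance : DistribLattice (ι → Bool × Bool)) with
    dneg := fun f i => ∼(f i)
    dneg_dneg := fun f => funext fun i => DeMorgan.dneg_dneg (f i)
    dneg_sup := fun f g => funext fun i => DeMorgan.dneg_sup (f i) (g i) }

/-!
Let `F` be a prime upset of a distributive lattice that is an `n`-filter, and call a family of
elements of `F` incompatible if all pairwise meets of distinct members leave `F`. Such a family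
has at most `n` members: for `a₀, …, aₙ` put `eᵢ = ⋁_{j ≠ i} aⱼ`; every `n` of the `eᵢ` lie
above the `aᵥ` whose index they miss, so `⋀ eᵢ ∈ F`, and primality applied twice (first to
`⋀ eᵢ ≤ e₀`, then to `⋀ eᵢ ⊓ aⱼ ≤ eⱼ`) produces `aⱼ ⊓ aₗ ∈ F` with `j ≠ l`.
Fix an incompatible family `d₀, …, d_{k-1}` of maximal length. By maximality every `x ∈ F`
satisfies `x ⊓ dᵢ ∈ F` for some `i`, so `F` is the union of the sets `{x | x ⊓ dᵢ ∈ F}`, which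
inherit primality and completeness from `F`. They are filters: if `x ⊓ dᵢ, y ⊓ dᵢ ∈ F`, the
family with `dᵢ` replaced by `x ⊓ dᵢ` is still incompatible, and covering `y ⊓ dᵢ` by it
forces `y ⊓ dᵢ ⊓ x ⊓ dᵢ ∈ F`.
Conversely, if `F` is the union of `k ≤ n` filters `Gᵢ` and `Y` is not contained in any `Gᵢ`,
choosing a witness `yᵢ ∈ Y \ Gᵢ` for each `i` gives a subset of size `≤ n` whose meet is not in `F`.
-/

open Finset

section Lattice

variable {α : Type*} [Lattice α] {F : Set α} {n : ℕ}

theorem IsNFilter.inf'_mem_of_forall_card_le (hF : IsNFilter n F) {ι : Type*} (s : Finset ι)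
    (hs : s.Nonempty) (e : ι → α)
    (h : ∀ t ⊆ s, ∀ ht : t.Nonempty, t.card ≤ n → t.inf' ht e ∈ F) : s.inf' hs e ∈ F := by
  classical
  have hY := hF.2 (s.image e) (hs.image e) fun X hX hXs hXn => by
    obtain ⟨t, hts, hinj, rfl⟩ :=
      exists_subset_injOn_image_eq_of_surjOn (f := e) (↑s) X fun x hx => by simpa using hXs hx
    rw [inf'_image]
    exact h t (mod_cast hts) _ (card_image_of_injOn hinj ▸ hXn)
  rwa [inf'_image] at hY

theorem isUpset_iUnion {ι : Type*} {G : ι → Set α} (hG : ∀ i, IsUpset (G i)) :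
    IsUpset (⋃ i, G i) := fun _ _ hx hxy =>
  let ⟨i, hi⟩ := Set.mem_iUnion.1 hx
  Set.mem_iUnion.2 ⟨i, hG i hi hxy⟩

theorem isPrimeUpset_iUnion {ι : Type*} {G : ι → Set α} (hG : ∀ i, IsPrimeUpset (G i)) :
    IsPrimeUpset (⋃ i, G i) := fun x y hxy => by
  obtain ⟨i, hi⟩ := Set.mem_iUnion.1 hxy
  exact (hG i x y hi).imp (Set.mem_iUnion_of_mem i) (Set.mem_iUnion_of_mem i)

theorem isNFilter_iUnion {ι : Type*} [Fintype ι] [Nonempty ι] {G : ι → Set α}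
    (hG : ∀ i, IsLatFilter (G i)) (hcard : Fintype.card ι ≤ n) : IsNFilter n (⋃ i, G i) := by
  classical
  refine ⟨isUpset_iUnion fun i => (hG i).1, fun Y hY hsmall => ?_⟩
  suffices ∃ i, ∀ y ∈ Y, y ∈ G i by
    obtain ⟨i, hi⟩ := this
    exact Set.mem_iUnion_of_mem i
      (inf'_mem (G i) (fun x hx y hy => (hG i).2 x y hx hy) Y hY id hi)
  by_contra! hmiss
  choose y hyY hyG using hmiss
  have hX : (univ.image y).inf' (univ_nonempty.image y) id ∈ ⋃ i, G i :=
    hsmall _ _ (image_subset_iff.2 fun i _ => hyY i) (card_image_le.trans hcard)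
  obtain ⟨i, hi⟩ := Set.mem_iUnion.1 hX
  exact hyG i ((hG i).1 hi (inf'_le id (mem_image_of_mem y (mem_univ i))))

def IsIncompatibleFamily (F : Set α) {ι : Type*} (d : ι → α) : Prop :=
  (∀ i, d i ∈ F) ∧ Pairwise fun i j => d i ⊓ d j ∉ F

theorem IsIncompatibleFamily.of_le {ι : Type*} {d d' : ι → α} (hF : IsUpset F)
    (hd : IsIncompatibleFamily F d) (hle : ∀ i, d' i ≤ d i) (hmem : ∀ i, d' i ∈ F) :
    IsIncompatibleFamily F d' :=
  ⟨hmem, fun _ _ hij h => hd.2 hij (hF h (inf_le_inf (hle _) (hle _)))⟩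

theorem IsIncompatibleFamily.exists_inf_mem {k : ℕ} {d : Fin k → α}
    (hd : IsIncompatibleFamily F d)
    (hmax : ∀ d' : Fin (k + 1) → α, ¬IsIncompatibleFamily F d') {x : α} (hx : x ∈ F) :
    ∃ i, x ⊓ d i ∈ F := by
  by_contra! h
  refine hmax (Fin.cons x d) ⟨Fin.cases hx hd.1, fun i j hij => ?_⟩
  cases i using Fin.cases <;> cases j using Fin.cases
  · exact absurd rfl hij
  · simpa using h _
  · simpa [inf_comm] using h _
  · simp only [ne_eq, Fin.succ_inj, Fin.cons_succ] at hij ⊢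
    exact hd.2 hij

theorem IsIncompatibleFamily.inf_mem {k : ℕ} {d : Fin k → α} (hF : IsUpset F)
    (hd : IsIncompatibleFamily F d)
    (hmax : ∀ d' : Fin (k + 1) → α, ¬IsIncompatibleFamily F d') (i : Fin k) {x y : α}
    (hx : x ⊓ d i ∈ F) (hy : y ⊓ d i ∈ F) : x ⊓ y ⊓ d i ∈ F := by
  classical
  have hd' : IsIncompatibleFamily F (Function.update d i (x ⊓ d i)) := by
    refine hd.of_le hF (fun j => ?_) (fun j => ?_) <;> by_cases hji : j = i
    · subst hji; simp
    · simp [hji]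
    · subst hji; simpa using hx
    · simpa [hji] using hd.1 j
  obtain ⟨j, hj⟩ := hd'.exists_inf_mem hmax hy
  by_cases hji : j = i
  · subst hji
    simp only [Function.update_self] at hj
    exact hF hj (le_inf (le_inf (inf_le_right.trans inf_le_left) (inf_le_left.trans inf_le_left))
      (inf_le_right.trans inf_le_right))
  · simp only [Function.update_of_ne hji] at hj
    exact absurd (hF hj (inf_le_inf_right _ inf_le_right)) (hd.2 (Ne.symm hji))

end Lattice

section DistribLattice

variable {α : Type*} [DistribLattice α] {F : Set α} {n : ℕ}

theorem IsPrimeUpset.exists_inf_mem_of_le_sup' (hp : IsPrimeUpset F)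
    {ι : Type*} {s : Finset ι} (hs : s.Nonempty) {a : ι → α} {x : α} (hx : x ∈ F)
    (hle : x ≤ s.sup' hs a) : ∃ j ∈ s, x ⊓ a j ∈ F := by
  have hmem : s.sup' hs (fun j => x ⊓ a j) ∈ F := by
    rwa [← sup'_inf_distrib_left, inf_eq_left.2 hle]
  by_contra! hnot
  exact sup'_induction hs _ (p := (· ∉ F))
    (fun _ h₁ _ h₂ h => (hp _ _ h).elim h₁ h₂) hnot hmem

theorem isPrimeUpset_setOf_inf_mem (hp : IsPrimeUpset F) (d : α) :
    IsPrimeUpset {x | x ⊓ d ∈ F} := fun x y hxy => hp _ _ (by simpa [inf_sup_right] using hxy)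

theorem IsIncompatibleFamily.card_le {ι : Type*} [Fintype ι] {d : ι → α}
    (hp : IsPrimeUpset F) (hnf : IsNFilter n F) (hn : 1 ≤ n) (hd : IsIncompatibleFamily F d) :
    Fintype.card ι ≤ n := by
  classical
  by_contra! hlt
  have herase : ∀ i, (univ.erase i : Finset ι).Nonempty := fun i => by
    rw [← card_pos, card_erase_of_mem (mem_univ i), card_univ]
    omega
  let e i := (univ.erase i).sup' (herase i) d
  have hde : ∀ i j, i ≠ j → d i ≤ e j := fun i j hij =>
    le_sup' d (mem_erase.2 ⟨hij, mem_univ i⟩)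
  obtain ⟨i₀⟩ : Nonempty ι := Fintype.card_pos_iff.1 (by omega)
  have hx : univ.inf' ⟨i₀, mem_univ i₀⟩ e ∈ F :=
    hnf.inf'_mem_of_forall_card_le _ _ _ fun t _ _ htn => by
      obtain ⟨v, -, hv⟩ := exists_mem_notMem_of_card_lt_card (s := t) (t := univ)
        (by rw [card_univ]; omega)
      exact hnf.1 (hd.1 v) (le_inf' _ _ fun i hi => hde v i (ne_of_mem_of_not_mem hi hv).symm)
  obtain ⟨j, -, hj⟩ := hp.exists_inf_mem_of_le_sup' (herase i₀) hx
    (inf'_le e (mem_univ i₀))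
  obtain ⟨l, hl, hjl⟩ := hp.exists_inf_mem_of_le_sup' (herase j) hj
    (inf_le_left.trans (inf'_le e (mem_univ j)))
  exact hd.2 (mem_erase.1 hl).1.symm (hnf.1 hjl (inf_le_inf_right _ inf_le_right))

theorem exists_maximal_isIncompatibleFamily (hp : IsPrimeUpset F) (hnf : IsNFilter n F)
    (hn : 1 ≤ n) (hne : F.Nonempty) :
    ∃ k, 1 ≤ k ∧ k ≤ n ∧ ∃ d : Fin k → α, IsIncompatibleFamily F d ∧
      ∀ d' : Fin (k + 1) → α, ¬IsIncompatibleFamily F d' := by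
  classical
  let P k := ∃ d : Fin k → α, IsIncompatibleFamily F d
  have hbound : ∀ k, P k → k ≤ n := fun k ⟨d, hd⟩ => by simpa using hd.card_le hp hnf hn
  obtain ⟨x, hx⟩ := hne
  have hP₁ : P 1 := ⟨fun _ => x, fun _ => hx, Subsingleton.pairwise⟩
  obtain ⟨d, hd⟩ : P (Nat.findGreatest P n) := Nat.findGreatest_spec hn hP₁
  exact ⟨_, Nat.le_findGreatest hn hP₁, Nat.findGreatest_le n, d, hd, fun d' hd' =>
    Nat.findGreatest_is_greatest (Nat.lt_succ_self _) (hbound _ ⟨d', hd'⟩) ⟨d', hd'⟩⟩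

end DistribLattice

section DeMorgan

variable {L : Type*} [DeMorgan L]

theorem AlmostComplete.iUnion {ι : Type*} {G : ι → Set L} (hG : ∀ i, AlmostComplete (G i)) :
    AlmostComplete (⋃ i, G i) := fun x hx y => by
  obtain ⟨i, hi⟩ := Set.mem_iUnion.1 hx
  exact Set.mem_iUnion_of_mem i (hG i x hi y)

theorem AlmostComplete.setOf_inf_mem {F : Set L} (hF : AlmostComplete F) (d : L) :
    AlmostComplete {x | x ⊓ d ∈ F} := fun x hx y => by
  simpa only [Set.mem_ofPred_eq, inf_right_comm x] using hF _ hx y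

theorem exists_iUnion_eq_of_isNFilter {n : ℕ} (hn : 1 ≤ n) {F : Set L}
    (hc : IsCompleteUpset F) (hp : IsPrimeUpset F) (hnf : IsNFilter n F) :
    ∃ k : ℕ, 1 ≤ k ∧ k ≤ n ∧ ∃ G : Fin k → Set L,
      (∀ i : Fin k, IsCompleteUpset (G i) ∧ IsPrimeUpset (G i) ∧ IsLatFilter (G i)) ∧
      F = ⋃ i : Fin k, G i := by
  obtain ⟨k, hk₁, hkn, d, hd, hmax⟩ := exists_maximal_isIncompatibleFamily hp hnf hn hc.2
  refine ⟨k, hk₁, hkn, fun i => {x | x ⊓ d i ∈ F}, fun i => ⟨⟨hc.1.setOf_inf_mem _, d i, ?_⟩,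
    isPrimeUpset_setOf_inf_mem hp _, fun x y hx hxy => hnf.1 hx (inf_le_inf_right _ hxy),
    fun x y => hd.inf_mem hnf.1 hmax i⟩, ?_⟩
  · simpa using hd.1 i
  · ext x
    exact ⟨fun hx => Set.mem_iUnion.2 (hd.exists_inf_mem hmax hx),
      fun hx => (Set.mem_iUnion.1 hx).elim fun _ hi => hnf.1 hi inf_le_left⟩

end DeMorgan

theorem statement1 {L : Type*} [DeMorgan L] (n : ℕ) (hn : 1 ≤ n)
    (F : Set L) :
    (IsCompleteUpset F ∧ IsPrimeUpset F ∧ IsNFilter n F) ↔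
      ∃ k : ℕ, 1 ≤ k ∧ k ≤ n ∧ ∃ G : Fin k → Set L,
        (∀ i : Fin k, IsCompleteUpset (G i) ∧ IsPrimeUpset (G i) ∧ IsLatFilter (G i)) ∧
        F = ⋃ i : Fin k, G i := by
  refine ⟨fun ⟨hc, hp, hnf⟩ => exists_iUnion_eq_of_isNFilter hn hc hp hnf, ?_⟩
  rintro ⟨k, hk₁, hkn, G, hG, rfl⟩
  have : Nonempty (Fin k) := ⟨⟨0, hk₁⟩⟩
  obtain ⟨x, hx⟩ := (hG ⟨0, hk₁⟩).1.2
  exact ⟨⟨AlmostComplete.iUnion fun i => (hG i).1.1, x, Set.mem_iUnion_of_mem _ hx⟩,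
    isPrimeUpset_iUnion fun i => (hG i).2.1,
    isNFilter_iUnion (fun i => (hG i).2.2) (by simpa using hkn)⟩
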